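/- Gyration preserves refined link-pattern data: let (𝒢,τ,Γ) be a valid triplet and φ ∈ Fpl(𝒢,τ). Then H_Γ(φ) ∈ Fpl(𝒢,τ̄), and π_b(H_Γ(φ)) = π_b(φ), π_w(H_Γ(φ)) = π_w(φ), and ℓ(H_Γ(φ)) = ℓ(φ). Moreover H_Γ ∘ H_Γ is the identity, so H_Γ is a bijection from Fpl(𝒢,τ) onto Fpl(𝒢,τ̄). -/

import Mathlib

open scoped Classical

/-! ### Abstract graphs, cycle partitions and the map `H_Γ`. -/

/-- A closed cycle in the graph with edge-endpoint map `ends : E → Sym2 V`: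
edge `i` joins the vertices `i` and `i+1`. -/
structure CycleIn (V E : Type) (ends : E → Sym2 V) where
  len : ℕ
  lenPos : 0 < len
  edge : ZMod len → E
  vtx : ZMod len → V
  edgeInj : Function.Injective edge
  vtxInj : Function.Injective vtx
  ends_eq : ∀ i, ends (edge i) = s(vtx i, vtx (i + 1))

/-- Number of endpoints of the edge `e` equal to `v` (2 for a loop at `v`). -/
noncomputable def incG {V E : Type} (ends : E → Sym2 V) (e : E) (v : V) : ℕ :=
  if ends e = s(v, v) then 2 else if v ∈ ends e then 1 else 0

/-- Degree of a vertex. -/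
noncomputable def degG {V E : Type} [Fintype E] (ends : E → Sym2 V) (v : V) : ℕ :=
  ∑ e : E, incG ends e v

/-- Black degree of a vertex in a configuration `φ`. -/
noncomputable def bdegG {V E : Type} [Fintype E] (ends : E → Sym2 V)
    (φ : E → Bool) (v : V) : ℕ :=
  ∑ e : E, if φ e then incG ends e v else 0

/-- FPL on the abstract graph with boundary condition `τ`: `φ` agrees with `τ` on the
edges incident to degree-2 vertices, and every degree-4 vertex has two black edges. -/
def IsFplG {V E : Type} [Fintype E] (ends : E → Sym2 V) (τ : E → Bool)
    (φ : E → Bool) : Prop :=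
  (∀ e (v : V), v ∈ ends e → degG ends v = 2 → φ e = τ e) ∧
    ∀ v, degG ends v = 4 → bdegG ends φ v = 2

/-- `V''(τ)`: degree-2 vertices incident to one black and one white edge. -/
def Vpp {V E : Type} [Fintype E] (ends : E → Sym2 V) (τ : E → Bool) (v : V) : Prop :=
  degG ends v = 2 ∧ bdegG ends τ v = 1

/-- Connectivity of vertices through edges of colour `b`. -/
def VConn {V E : Type} (ends : E → Sym2 V) (φ : E → Bool) (b : Bool) : V → V → Prop :=
  Relation.ReflTransGen fun u w => ∃ e, φ e = b ∧ u ∈ ends e ∧ w ∈ ends e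

def ActiveV {V E : Type} (ends : E → Sym2 V) (φ : E → Bool) (b : Bool) (v : V) : Prop :=
  ∃ e, φ e = b ∧ v ∈ ends e

/-- The number of closed monochromatic cycles of colour `b`: components of the
`b`-coloured subgraph containing no vertex of `V''(τ)`. -/
noncomputable def cycCount {V E : Type} [Fintype E] (ends : E → Sym2 V) (τ : E → Bool)
    (φ : E → Bool) (b : Bool) : ℕ :=
  Set.ncard {C : Set V |
    (∃ v, ActiveV ends φ b v ∧ C = {w | VConn ends φ b v w ∧ ActiveV ends φ b w}) ∧
    ∀ w ∈ C, ¬ Vpp ends τ w}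

/-- `Γ` is a partition of the edge set into edge-disjoint closed cycles. -/
def IsCyclePartition {V E : Type} (ends : E → Sym2 V) (Γ : E → CycleIn V E ends) : Prop :=
  (∀ e, ∃ i, (Γ e).edge i = e) ∧ ∀ e e', (∃ i, (Γ e).edge i = e') → Γ e' = Γ e

/-- Valid triplet: a cycle partition, all cycles of length at most 4, and cycles
through `V''(τ)` of length at most 3. -/
def ValidTriplet {V E : Type} [Fintype E] (ends : E → Sym2 V) (τ : E → Bool)
    (Γ : E → CycleIn V E ends) : Prop :=
  IsCyclePartition ends Γ ∧ (∀ e, (Γ e).len ≤ 4) ∧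
    ∀ e, (∃ i, Vpp ends τ ((Γ e).vtx i)) → (Γ e).len ≤ 3

/-- The gyration map `H_Γ`: complement the colours on every cell, except on the
length-4 cells whose colours alternate cyclically, which are left unchanged. -/
noncomputable def HG {V E : Type} (ends : E → Sym2 V) (Γ : E → CycleIn V E ends)
    (φ : E → Bool) : E → Bool := fun e =>
  if (Γ e).len = 4 ∧ ∀ i, φ ((Γ e).edge i) ≠ φ ((Γ e).edge (i + 1)) then φ e
  else !(φ e)


/-!
Gyration acts cell by cell, and the proof follows the colour changes of a configuration: the
vertices at which the two edges of a cell have different colours. Every vertex of `V''(τ)` is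
one, and since a degree-4 vertex has two black edges, a colour change of one cell at a vertex is
a colour change of every cell through it. Hence a monochromatic path leaves a cell only at a
colour change, and connectivity between colour changes is generated by arcs inside single
cells. Gyration keeps the colour changes of every cell; it fixes the alternating squares and
complements every other cell, which, having length at most 4, has at most two colour changes,
joined inside the cell by an arc of each colour. So these arcs, and with them `π_b` and `π_w`,
survive. A closed cycle without colour change is a single monochromatic cell, whose colour
gyration flips; any other closed cycle goes to the closed cycle of the same colour through any
of its colour changes.
-/

open Relation

/-- Adjacency along the cycle `ZMod n` through edges of colour `b`, edge `i` joining `i` and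
`i + 1`. -/
def CycStep {n : ℕ} (c : ZMod n → Bool) (b : Bool) (i i' : ZMod n) : Prop :=
  c i = b ∧ i' = i + 1 ∨ c i' = b ∧ i = i' + 1

instance {n : ℕ} (c : ZMod n → Bool) (b : Bool) : DecidableRel (CycStep c b) := fun _ _ => by
  unfold CycStep; infer_instance

/-- The colour changes cut a cycle of length at most four that is not an alternating square into
at most two monochromatic arcs; for such short cycles this is a finite check. -/
lemma reflTransGen_cycStep {n : ℕ} [NeZero n] (hn : n ≤ 4) (c : ZMod n → Bool)
    (hc : ¬ (n = 4 ∧ ∀ i, c i ≠ c (i + 1))) {j k : ZMod n} (hj : c (j - 1) ≠ c j)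
    (hk : c (k - 1) ≠ c k) (b : Bool) : ReflTransGen (CycStep c b) j k := by
  suffices h : ∃ m₁ m₂, (j = m₁ ∨ CycStep c b j m₁) ∧ (m₁ = m₂ ∨ CycStep c b m₁ m₂) ∧
      (m₂ = k ∨ CycStep c b m₂ k) by
    obtain ⟨m₁, m₂, h₁, h₂, h₃⟩ := h
    have hstep : ∀ {x y}, x = y ∨ CycStep c b x y → ReflTransGen (CycStep c b) x y := by
      rintro x y (rfl | h)
      exacts [ReflTransGen.refl, ReflTransGen.single h]
    exact (hstep h₁).trans ((hstep h₂).trans (hstep h₃))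
  obtain rfl | rfl | rfl | rfl : n = 1 ∨ n = 2 ∨ n = 3 ∨ n = 4 := by
    have := NeZero.pos n; omega
  all_goals revert c j k b; decide

namespace CycleIn

variable {V E : Type} {ends : E → Sym2 V} (γ : CycleIn V E ends)

instance : NeZero γ.len := ⟨γ.lenPos.ne'⟩

lemma mem_ends_edge_iff {i : ZMod γ.len} {v : V} :
    v ∈ ends (γ.edge i) ↔ v = γ.vtx i ∨ v = γ.vtx (i + 1) := by
  rw [γ.ends_eq, Sym2.mem_iff]

lemma vtx_mem_ends_edge (i : ZMod γ.len) : γ.vtx i ∈ ends (γ.edge i) :=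
  γ.mem_ends_edge_iff.2 (Or.inl rfl)

lemma vtx_add_one_mem_ends_edge (i : ZMod γ.len) : γ.vtx (i + 1) ∈ ends (γ.edge i) :=
  γ.mem_ends_edge_iff.2 (Or.inr rfl)

lemma incG_edge (i : ZMod γ.len) (v : V) :
    incG ends (γ.edge i) v =
      (if v = γ.vtx i then 1 else 0) + (if v = γ.vtx (i + 1) then 1 else 0) := by
  simp only [incG, γ.ends_eq, Sym2.mem_iff, Sym2.eq_iff]
  split_ifs <;> grind

noncomputable def colourDeg (ψ : E → Bool) (b : Bool) (v : V) : ℕ :=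
  ∑ i : ZMod γ.len, if ψ (γ.edge i) = b then incG ends (γ.edge i) v else 0

lemma colourDeg_vtx (ψ : E → Bool) (b : Bool) (j : ZMod γ.len) :
    γ.colourDeg ψ b (γ.vtx j) =
      (if ψ (γ.edge (j - 1)) = b then 1 else 0) + (if ψ (γ.edge j) = b then 1 else 0) := by
  have hterm : ∀ i, (if ψ (γ.edge i) = b then incG ends (γ.edge i) (γ.vtx j) else 0) =
      (if j - 1 = i then (if ψ (γ.edge i) = b then 1 else 0) else 0) +
        (if j = i then (if ψ (γ.edge i) = b then 1 else 0) else 0) := by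
    intro i
    simp only [incG_edge, γ.vtxInj.eq_iff, sub_eq_iff_eq_add]
    split_ifs <;> simp_all
  simp only [colourDeg, hterm, Finset.sum_add_distrib, Finset.sum_ite_eq, Finset.mem_univ,
    if_true]

lemma colourDeg_eq_zero {v : V} (hv : v ∉ Set.range γ.vtx) (ψ : E → Bool) (b : Bool) :
    γ.colourDeg ψ b v = 0 := by
  refine Finset.sum_eq_zero fun i _ => ?_
  have h₁ : v ≠ γ.vtx i := fun h => hv ⟨i, h.symm⟩
  have h₂ : v ≠ γ.vtx (i + 1) := fun h => hv ⟨i + 1, h.symm⟩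
  simp [incG_edge, h₁, h₂]

lemma one_le_colourDeg {ψ : E → Bool} {b : Bool} {v : V} {i : ZMod γ.len}
    (hi : ψ (γ.edge i) = b) (hv : v ∈ ends (γ.edge i)) : 1 ≤ γ.colourDeg ψ b v := by
  have h₁ : 1 ≤ if ψ (γ.edge i) = b then incG ends (γ.edge i) v else 0 := by
    rw [if_pos hi, incG_edge]
    rcases γ.mem_ends_edge_iff.1 hv with h | h <;> simp [h]
  exact h₁.trans (Finset.single_le_sum (f := fun i =>
    if ψ (γ.edge i) = b then incG ends (γ.edge i) v else 0) (by simp) (Finset.mem_univ i))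

lemma colourDeg_add_colourDeg_not (ψ : E → Bool) (b : Bool) (j : ZMod γ.len) :
    γ.colourDeg ψ b (γ.vtx j) + γ.colourDeg ψ (!b) (γ.vtx j) = 2 := by
  rw [colourDeg_vtx, colourDeg_vtx]
  cases ψ (γ.edge (j - 1)) <;> cases ψ (γ.edge j) <;> cases b <;> rfl

def IsColourChange (ψ : E → Bool) (v : V) : Prop :=
  ∃ j, γ.vtx j = v ∧ ψ (γ.edge (j - 1)) ≠ ψ (γ.edge j)

lemma isColourChange_vtx_iff {ψ : E → Bool} {j : ZMod γ.len} :
    γ.IsColourChange ψ (γ.vtx j) ↔ ψ (γ.edge (j - 1)) ≠ ψ (γ.edge j) :=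
  ⟨fun ⟨_, hj, h⟩ => γ.vtxInj hj ▸ h, fun h => ⟨j, rfl, h⟩⟩

lemma colourDeg_eq_one_iff {ψ : E → Bool} {b : Bool} {v : V} (hv : v ∈ Set.range γ.vtx) :
    γ.colourDeg ψ b v = 1 ↔ γ.IsColourChange ψ v := by
  obtain ⟨j, rfl⟩ := hv
  rw [isColourChange_vtx_iff, colourDeg_vtx]
  cases ψ (γ.edge (j - 1)) <;> cases ψ (γ.edge j) <;> cases b <;> simp

lemma colourDeg_eq_two_iff {ψ : E → Bool} {b : Bool} {j : ZMod γ.len} :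
    γ.colourDeg ψ b (γ.vtx j) = 2 ↔ ψ (γ.edge (j - 1)) = b ∧ ψ (γ.edge j) = b := by
  rw [colourDeg_vtx]
  cases ψ (γ.edge (j - 1)) <;> cases ψ (γ.edge j) <;> cases b <;> simp

lemma IsColourChange.exists_edge {γ : CycleIn V E ends} {ψ : E → Bool} {v : V}
    (h : γ.IsColourChange ψ v) (b : Bool) :
    ∃ i, ψ (γ.edge i) = b ∧ v ∈ ends (γ.edge i) := by
  obtain ⟨j, rfl, hj⟩ := h
  by_cases hb : ψ (γ.edge j) = b
  · exact ⟨j, hb, γ.vtx_mem_ends_edge j⟩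
  · refine ⟨j - 1, ?_, by simpa using γ.vtx_add_one_mem_ends_edge (j - 1)⟩
    cases b <;> simp_all

def Conn (ψ : E → Bool) (b : Bool) : V → V → Prop :=
  ReflTransGen fun x y => ∃ i, ψ (γ.edge i) = b ∧ x ∈ ends (γ.edge i) ∧ y ∈ ends (γ.edge i)

lemma Conn.vconn {ψ : E → Bool} {b : Bool} {x y : V} (h : γ.Conn ψ b x y) :
    VConn ends ψ b x y :=
  ReflTransGen.mono (fun _ _ ⟨i, hi, hx, hy⟩ => ⟨γ.edge i, hi, hx, hy⟩) _ _ h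

lemma conn_vtx_of_forall_eq {ψ : E → Bool} {b : Bool} (hψ : ∀ i, ψ (γ.edge i) = b)
    (i j : ZMod γ.len) : γ.Conn ψ b (γ.vtx i) (γ.vtx j) := by
  have hwalk : ∀ d : ℕ, γ.Conn ψ b (γ.vtx i) (γ.vtx (i + d)) := by
    intro d
    induction d with
    | zero => rw [Nat.cast_zero, add_zero]; exact ReflTransGen.refl
    | succ d ih =>
      rw [Nat.cast_succ, ← add_assoc]
      exact ih.tail ⟨_, hψ _, γ.vtx_mem_ends_edge _, γ.vtx_add_one_mem_ends_edge _⟩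
  simpa using hwalk (j - i).val

def IsAlternating (ψ : E → Bool) : Prop :=
  γ.len = 4 ∧ ∀ i, ψ (γ.edge i) ≠ ψ (γ.edge (i + 1))

lemma not_isAlternating_of_forall_eq {ψ : E → Bool} {b : Bool}
    (hψ : ∀ i, ψ (γ.edge i) = b) : ¬ γ.IsAlternating ψ :=
  fun h => h.2 0 (by rw [hψ, hψ])

lemma isColourChange_of_isAlternating {ψ : E → Bool} (h : γ.IsAlternating ψ)
    (j : ZMod γ.len) : γ.IsColourChange ψ (γ.vtx j) :=
  γ.isColourChange_vtx_iff.2 (by simpa using h.2 (j - 1))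

lemma conn_of_isColourChange {ψ : E → Bool} (hlen : γ.len ≤ 4) (hψ : ¬ γ.IsAlternating ψ)
    {u w : V} (hu : γ.IsColourChange ψ u) (hw : γ.IsColourChange ψ w) (b : Bool) :
    γ.Conn ψ b u w := by
  obtain ⟨j, rfl, hj⟩ := hu
  obtain ⟨k, rfl, hk⟩ := hw
  refine ReflTransGen.lift γ.vtx ?_ _ _
    (reflTransGen_cycStep hlen (fun i => ψ (γ.edge i)) hψ hj hk b)
  rintro i i' (⟨hi, rfl⟩ | ⟨hi, rfl⟩)
  · exact ⟨i, hi, γ.vtx_mem_ends_edge i, γ.vtx_add_one_mem_ends_edge i⟩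
  · exact ⟨i', hi, γ.vtx_add_one_mem_ends_edge i', γ.vtx_mem_ends_edge i'⟩

end CycleIn

lemma incG_eq_zero {V E : Type} {ends : E → Sym2 V} {e : E} {v : V} (h : v ∉ ends e) :
    incG ends e v = 0 := by
  have : ends e ≠ s(v, v) := fun he => h (he ▸ Sym2.mem_mk_left v v)
  simp [incG, this, h]

namespace IsCyclePartition

variable {V E : Type} {ends : E → Sym2 V} {Γ : E → CycleIn V E ends}
  (hpart : IsCyclePartition ends Γ)
include hpart

lemma cell_edge (e : E) (i : ZMod (Γ e).len) : Γ ((Γ e).edge i) = Γ e :=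
  hpart.2 e _ ⟨i, rfl⟩

lemma cell_eq_iff {e e' : E} : Γ e' = Γ e ↔ ∃ i, (Γ e).edge i = e' :=
  ⟨fun h => h ▸ hpart.1 e', hpart.2 e e'⟩

lemma mem_range_vtx {e : E} {v : V} (he : v ∈ ends e) : v ∈ Set.range (Γ e).vtx := by
  obtain ⟨i, hi⟩ := hpart.1 e
  rw [← hi, CycleIn.mem_ends_edge_iff] at he
  rcases he with rfl | rfl
  exacts [⟨i, rfl⟩, ⟨i + 1, rfl⟩]

lemma exists_mem_ends {e : E} {v : V} (hv : v ∈ Set.range (Γ e).vtx) :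
    ∃ e', v ∈ ends e' ∧ Γ e' = Γ e := by
  obtain ⟨j, rfl⟩ := hv
  exact ⟨(Γ e).edge j, (Γ e).vtx_mem_ends_edge j, hpart.cell_edge e j⟩

lemma one_le_colourDeg {ψ : E → Bool} {b : Bool} {e : E} {v : V} (hc : ψ e = b)
    (hv : v ∈ ends e) : 1 ≤ (Γ e).colourDeg ψ b v := by
  obtain ⟨i, hi⟩ := hpart.1 e
  rw [← hi] at hc hv
  exact (Γ e).one_le_colourDeg hc hv

lemma conn_of_mem_ends {ψ : E → Bool} {b : Bool} {e : E} {x y : V} (hc : ψ e = b)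
    (hx : x ∈ ends e) (hy : y ∈ ends e) :
    (Γ e).Conn ψ b x y := by
  obtain ⟨i, hi⟩ := hpart.1 e
  rw [← hi] at hc hx hy
  exact ReflTransGen.single ⟨i, hc, hx, hy⟩

variable [Fintype E]

lemma sum_eq_sum_cells (g : E → ℕ) :
    ∑ e, g e = ∑ γ ∈ Finset.univ.image Γ, ∑ i : ZMod γ.len, g (γ.edge i) := by
  rw [← Finset.sum_fiberwise_of_maps_to fun e _ => Finset.mem_image_of_mem Γ (Finset.mem_univ e)]
  refine Finset.sum_congr rfl fun γ hγ => ?_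
  obtain ⟨e, -, rfl⟩ := Finset.mem_image.1 hγ
  have hfiber : Finset.univ.filter (fun e' => Γ e' = Γ e) = Finset.univ.image (Γ e).edge := by
    ext e'
    simp [hpart.cell_eq_iff]
  rw [hfiber, Finset.sum_image fun i _ j _ h => (Γ e).edgeInj h]

end IsCyclePartition

section ColourDegree

variable {V E : Type} [Fintype E] {ends : E → Sym2 V} {Γ : E → CycleIn V E ends}

noncomputable def colourDegG (ends : E → Sym2 V) (ψ : E → Bool) (b : Bool) (v : V) : ℕ :=
  ∑ e : E, if ψ e = b then incG ends e v else 0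

lemma bdegG_eq_colourDegG (ψ : E → Bool) (v : V) :
    bdegG ends ψ v = colourDegG ends ψ true v := rfl

lemma colourDegG_add_colourDegG_not (ψ : E → Bool) (b : Bool) (v : V) :
    colourDegG ends ψ b v + colourDegG ends ψ (!b) v = degG ends v := by
  rw [colourDegG, colourDegG, degG, ← Finset.sum_add_distrib]
  refine Finset.sum_congr rfl fun e _ => ?_
  cases ψ e <;> cases b <;> simp

noncomputable def cellsAt (Γ : E → CycleIn V E ends) (v : V) : Finset (CycleIn V E ends) :=
  (Finset.univ.image Γ).filter fun γ => v ∈ Set.range γ.vtx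

namespace IsCyclePartition

variable (hpart : IsCyclePartition ends Γ)
include hpart

lemma mem_cellsAt_iff {v : V} {γ : CycleIn V E ends} :
    γ ∈ cellsAt Γ v ↔ ∃ e, v ∈ ends e ∧ Γ e = γ := by
  simp only [cellsAt, Finset.mem_filter, Finset.mem_image, Finset.mem_univ, true_and]
  constructor
  · rintro ⟨⟨e, rfl⟩, hv⟩
    exact hpart.exists_mem_ends hv
  · rintro ⟨e, he, rfl⟩
    exact ⟨⟨e, rfl⟩, hpart.mem_range_vtx he⟩

lemma colourDegG_eq_sum (ψ : E → Bool) (b : Bool) (v : V) :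
    colourDegG ends ψ b v = ∑ γ ∈ cellsAt Γ v, γ.colourDeg ψ b v := by
  rw [colourDegG, hpart.sum_eq_sum_cells, cellsAt, Finset.sum_filter_of_ne]
  · rfl
  · exact fun γ _ h => not_not.1 fun hv => h (γ.colourDeg_eq_zero hv ψ b)

lemma degG_eq_two_mul_card (v : V) : degG ends v = 2 * (cellsAt Γ v).card := by
  rw [← colourDegG_add_colourDegG_not (fun _ => true) true, hpart.colourDegG_eq_sum,
    hpart.colourDegG_eq_sum, ← Finset.sum_add_distrib, mul_comm, ← smul_eq_mul,
    ← Finset.sum_const]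
  refine Finset.sum_congr rfl fun γ hγ => ?_
  obtain ⟨j, rfl⟩ := (Finset.mem_filter.1 hγ).2
  exact γ.colourDeg_add_colourDeg_not _ _ j

lemma cellsAt_eq_singleton {v : V} (hv : degG ends v = 2) {e : E} (he : v ∈ ends e) :
    cellsAt Γ v = {Γ e} := by
  have hcard : (cellsAt Γ v).card = 1 := by have := hpart.degG_eq_two_mul_card v; omega
  obtain ⟨γ, hγ⟩ := Finset.card_eq_one.1 hcard
  have : Γ e ∈ cellsAt Γ v := hpart.mem_cellsAt_iff.2 ⟨e, he, rfl⟩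
  rw [hγ, Finset.mem_singleton] at this
  rw [hγ, this]

lemma cell_eq_of_degG_eq_two {v : V} (hv : degG ends v = 2) {e e' : E} (he : v ∈ ends e)
    (he' : v ∈ ends e') : Γ e' = Γ e := by
  have : Γ e' ∈ cellsAt Γ v := hpart.mem_cellsAt_iff.2 ⟨e', he', rfl⟩
  rwa [hpart.cellsAt_eq_singleton hv he, Finset.mem_singleton] at this

lemma cellsAt_eq_pair {v : V} (hv : degG ends v = 4) {e e' : E} (he : v ∈ ends e)
    (he' : v ∈ ends e') (hne : Γ e ≠ Γ e') : cellsAt Γ v = {Γ e, Γ e'} := by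
  refine (Finset.eq_of_subset_of_card_le ?_ ?_).symm
  · intro γ hγ
    rcases Finset.mem_insert.1 hγ with rfl | hγ
    · exact hpart.mem_cellsAt_iff.2 ⟨e, he, rfl⟩
    · rw [Finset.mem_singleton.1 hγ]
      exact hpart.mem_cellsAt_iff.2 ⟨e', he', rfl⟩
  · rw [Finset.card_pair hne]
    have := hpart.degG_eq_two_mul_card v
    omega

lemma exists_two_cells {v : V} (hv : degG ends v = 4) :
    ∃ e e', v ∈ ends e ∧ v ∈ ends e' ∧ Γ e ≠ Γ e' := by
  have hcard : (cellsAt Γ v).card = 2 := by have := hpart.degG_eq_two_mul_card v; omega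
  obtain ⟨γ, γ', hne, hγγ'⟩ := Finset.card_eq_two.1 hcard
  obtain ⟨e, he, rfl⟩ := hpart.mem_cellsAt_iff.1 (hγγ' ▸ Finset.mem_insert_self _ _)
  obtain ⟨e', he', rfl⟩ :=
    hpart.mem_cellsAt_iff.1 (hγγ' ▸ Finset.mem_insert_of_mem (Finset.mem_singleton_self _))
  exact ⟨e, e', he, he', hne⟩

lemma colourDegG_of_degG_eq_two {v : V} (hv : degG ends v = 2) {e : E} (he : v ∈ ends e)
    (ψ : E → Bool) (b : Bool) : colourDegG ends ψ b v = (Γ e).colourDeg ψ b v := by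
  rw [hpart.colourDegG_eq_sum, hpart.cellsAt_eq_singleton hv he, Finset.sum_singleton]

lemma colourDegG_of_degG_eq_four {v : V} (hv : degG ends v = 4) {e e' : E} (he : v ∈ ends e)
    (he' : v ∈ ends e') (hne : Γ e ≠ Γ e') (ψ : E → Bool) (b : Bool) :
    colourDegG ends ψ b v = (Γ e).colourDeg ψ b v + (Γ e').colourDeg ψ b v := by
  rw [hpart.colourDegG_eq_sum, hpart.cellsAt_eq_pair hv he he' hne, Finset.sum_pair hne]

end IsCyclePartition

end ColourDegree

section Gyration

variable {V E : Type} {ends : E → Sym2 V} {Γ : E → CycleIn V E ends}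

lemma HG_of_isAlternating {ψ : E → Bool} {e : E} (h : (Γ e).IsAlternating ψ) :
    HG ends Γ ψ e = ψ e :=
  if_pos h

lemma HG_of_not_isAlternating {ψ : E → Bool} {e : E} (h : ¬ (Γ e).IsAlternating ψ) :
    HG ends Γ ψ e = !ψ e :=
  if_neg h

namespace IsCyclePartition

variable (hpart : IsCyclePartition ends Γ)
include hpart

lemma HG_edge_of_isAlternating {ψ : E → Bool} {e : E} (h : (Γ e).IsAlternating ψ)
    (i : ZMod (Γ e).len) : HG ends Γ ψ ((Γ e).edge i) = ψ ((Γ e).edge i) :=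
  HG_of_isAlternating (by rwa [hpart.cell_edge e i])

lemma HG_edge_of_not_isAlternating {ψ : E → Bool} {e : E} (h : ¬ (Γ e).IsAlternating ψ)
    (i : ZMod (Γ e).len) : HG ends Γ ψ ((Γ e).edge i) = !ψ ((Γ e).edge i) :=
  HG_of_not_isAlternating (by rwa [hpart.cell_edge e i])

lemma isAlternating_HG_iff (ψ : E → Bool) (e : E) :
    (Γ e).IsAlternating (HG ends Γ ψ) ↔ (Γ e).IsAlternating ψ := by
  by_cases h : (Γ e).IsAlternating ψ
  · simp only [CycleIn.IsAlternating, hpart.HG_edge_of_isAlternating h]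
  · simp only [CycleIn.IsAlternating, hpart.HG_edge_of_not_isAlternating h, ne_eq,
      Bool.not_inj_iff]

lemma HG_HG (ψ : E → Bool) : HG ends Γ (HG ends Γ ψ) = ψ := by
  funext e
  obtain ⟨i, hi⟩ := hpart.1 e
  by_cases h : (Γ e).IsAlternating ψ
  · rw [← hi, hpart.HG_edge_of_isAlternating ((hpart.isAlternating_HG_iff ψ e).2 h),
      hpart.HG_edge_of_isAlternating h]
  · rw [← hi, hpart.HG_edge_of_not_isAlternating (mt (hpart.isAlternating_HG_iff ψ e).1 h),
      hpart.HG_edge_of_not_isAlternating h, Bool.not_not]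

lemma isColourChange_HG_iff (ψ : E → Bool) (e : E) (v : V) :
    (Γ e).IsColourChange (HG ends Γ ψ) v ↔ (Γ e).IsColourChange ψ v := by
  by_cases h : (Γ e).IsAlternating ψ
  · simp only [CycleIn.IsColourChange, hpart.HG_edge_of_isAlternating h]
  · simp only [CycleIn.IsColourChange, hpart.HG_edge_of_not_isAlternating h, ne_eq,
      Bool.not_inj_iff]

lemma conn_HG_iff_of_isAlternating {ψ : E → Bool} {e : E} (h : (Γ e).IsAlternating ψ)
    (b : Bool) {x y : V} : (Γ e).Conn (HG ends Γ ψ) b x y ↔ (Γ e).Conn ψ b x y := by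
  simp only [CycleIn.Conn, hpart.HG_edge_of_isAlternating h]

lemma colourDeg_HG_add_colourDeg (ψ : E → Bool) (b : Bool) {e : E} {v : V}
    (hv : v ∈ Set.range (Γ e).vtx) :
    (Γ e).colourDeg (HG ends Γ ψ) b v + (Γ e).colourDeg ψ b v = 2 := by
  obtain ⟨j, rfl⟩ := hv
  by_cases h : (Γ e).IsAlternating ψ
  · have hchange := (Γ e).isColourChange_of_isAlternating h j
    rw [((Γ e).colourDeg_eq_one_iff ⟨j, rfl⟩).2 hchange,
      ((Γ e).colourDeg_eq_one_iff ⟨j, rfl⟩).2 ((hpart.isColourChange_HG_iff ψ e _).2 hchange)]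
  · have hflip : (Γ e).colourDeg (HG ends Γ ψ) b ((Γ e).vtx j) =
        (Γ e).colourDeg ψ (!b) ((Γ e).vtx j) := by
      refine Finset.sum_congr rfl fun i _ => ?_
      rw [hpart.HG_edge_of_not_isAlternating h]
      cases ψ ((Γ e).edge i) <;> cases b <;> rfl
    rw [hflip, add_comm]
    exact (Γ e).colourDeg_add_colourDeg_not ψ b j

end IsCyclePartition

end Gyration

section Fpl

variable {V E : Type} [Fintype E] {ends : E → Sym2 V} {Γ : E → CycleIn V E ends}
  {τ φ : E → Bool}

def IsBalanced (ends : E → Sym2 V) (ψ : E → Bool) : Prop :=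
  ∀ v, degG ends v = 4 → bdegG ends ψ v = 2

lemma IsBalanced.colourDegG_eq_two {ψ : E → Bool} (hψ : IsBalanced ends ψ) {v : V}
    (hv : degG ends v = 4) (b : Bool) : colourDegG ends ψ b v = 2 := by
  have h := colourDegG_add_colourDegG_not (ends := ends) ψ true v
  have ht : colourDegG ends ψ true v = 2 := hψ v hv
  cases b
  · simp only [Bool.not_true] at h; omega
  · exact ht

lemma IsCyclePartition.isBalanced_HG (hpart : IsCyclePartition ends Γ) {ψ : E → Bool}
    (hψ : IsBalanced ends ψ) : IsBalanced ends (HG ends Γ ψ) := by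
  intro v hv
  obtain ⟨e, e', he, he', hne⟩ := hpart.exists_two_cells hv
  have h₁ := hpart.colourDeg_HG_add_colourDeg ψ true (hpart.mem_range_vtx he)
  have h₂ := hpart.colourDeg_HG_add_colourDeg ψ true (hpart.mem_range_vtx he')
  have hψv := hψ.colourDegG_eq_two hv true
  rw [hpart.colourDegG_of_degG_eq_four hv he he' hne] at hψv
  rw [bdegG_eq_colourDegG, hpart.colourDegG_of_degG_eq_four hv he he' hne]
  omega

lemma IsFplG.bdegG_eq (hφ : IsFplG ends τ φ) {v : V} (hv : degG ends v = 2) :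
    bdegG ends φ v = bdegG ends τ v := by
  refine Finset.sum_congr rfl fun e _ => ?_
  by_cases he : v ∈ ends e
  · rw [hφ.1 e v he hv]
  · simp [incG_eq_zero he]

lemma vpp_not_iff {v : V} : Vpp ends (fun e => !τ e) v ↔ Vpp ends τ v := by
  have hnot : bdegG ends (fun e => !τ e) v = colourDegG ends τ false v := by
    refine Finset.sum_congr rfl fun e _ => ?_
    cases h : τ e <;> simp [h]
  have hsum := colourDegG_add_colourDegG_not (ends := ends) τ true v
  simp only [Vpp, hnot, bdegG_eq_colourDegG, Bool.not_true] at hsum ⊢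
  omega

lemma ValidTriplet.not (hvalid : ValidTriplet ends τ Γ) :
    ValidTriplet ends (fun e => !τ e) Γ :=
  ⟨hvalid.1, hvalid.2.1, fun e ⟨i, hi⟩ => hvalid.2.2 e ⟨i, vpp_not_iff.1 hi⟩⟩

/-- An alternating square has a colour change at each vertex, so it cannot pass through a
degree-2 vertex: that vertex would lie in `V''(τ)`, where cells have length at most 3. -/
lemma ValidTriplet.not_isAlternating (hvalid : ValidTriplet ends τ Γ)
    (hφ : IsFplG ends τ φ) {v : V} (hv : degG ends v = 2) {e : E} (he : v ∈ ends e) :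
    ¬ (Γ e).IsAlternating φ := by
  intro halt
  obtain ⟨j, rfl⟩ := hvalid.1.mem_range_vtx he
  have hφv : bdegG ends φ ((Γ e).vtx j) = 1 := by
    rw [bdegG_eq_colourDegG, hvalid.1.colourDegG_of_degG_eq_two hv he,
      (Γ e).colourDeg_eq_one_iff ⟨j, rfl⟩]
    exact (Γ e).isColourChange_of_isAlternating halt j
  have hlen := hvalid.2.2 e ⟨j, hv, hφ.bdegG_eq hv ▸ hφv⟩
  rw [halt.1] at hlen
  omega

lemma ValidTriplet.isFplG_HG (hvalid : ValidTriplet ends τ Γ) (hφ : IsFplG ends τ φ) :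
    IsFplG ends (fun e => !τ e) (HG ends Γ φ) :=
  ⟨fun e v he hv => by
    rw [HG_of_not_isAlternating (hvalid.not_isAlternating hφ hv he), hφ.1 e v he hv],
    hvalid.1.isBalanced_HG hφ.2⟩

lemma ValidTriplet.bijOn_HG (hvalid : ValidTriplet ends τ Γ) :
    Set.BijOn (HG ends Γ) {ψ | IsFplG ends τ ψ} {ψ | IsFplG ends (fun e => !τ e) ψ} := by
  refine Set.InvOn.bijOn ⟨fun ψ _ => hvalid.1.HG_HG ψ, fun ψ _ => hvalid.1.HG_HG ψ⟩
    (fun ψ hψ => hvalid.isFplG_HG hψ) fun ψ hψ => ?_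
  simpa using hvalid.not.isFplG_HG hψ

end Fpl

section Connectivity

variable {V E : Type} {ends : E → Sym2 V} {Γ : E → CycleIn V E ends} {ψ : E → Bool}

def IsColourChangeVertex (Γ : E → CycleIn V E ends) (ψ : E → Bool) (v : V) : Prop :=
  ∃ e, v ∈ ends e ∧ (Γ e).IsColourChange ψ v

lemma IsColourChangeVertex.activeV {v : V} (h : IsColourChangeVertex Γ ψ v) (b : Bool) :
    ActiveV ends ψ b v := by
  obtain ⟨e, -, hv⟩ := h
  obtain ⟨i, hi, hvi⟩ := hv.exists_edge b
  exact ⟨_, hi, hvi⟩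

lemma IsCyclePartition.isColourChangeVertex_HG_iff (hpart : IsCyclePartition ends Γ)
    {v : V} : IsColourChangeVertex Γ (HG ends Γ ψ) v ↔ IsColourChangeVertex Γ ψ v := by
  simp only [IsColourChangeVertex, hpart.isColourChange_HG_iff]

lemma IsCyclePartition.isColourChangeVertex_of_vpp [Fintype E]
    (hpart : IsCyclePartition ends Γ) {τ φ : E → Bool} (hφ : IsFplG ends τ φ) {w : V}
    (hw : Vpp ends τ w) : IsColourChangeVertex Γ φ w := by
  obtain ⟨hdeg, hb⟩ := hw
  have hcard : (cellsAt Γ w).Nonempty := by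
    rw [← Finset.card_pos]
    have := hpart.degG_eq_two_mul_card w
    omega
  obtain ⟨e, he, -⟩ := hpart.mem_cellsAt_iff.1 hcard.choose_spec
  refine ⟨e, he, ((Γ e).colourDeg_eq_one_iff (b := true) (hpart.mem_range_vtx he)).1 ?_⟩
  rw [← hpart.colourDegG_of_degG_eq_two hdeg he, ← bdegG_eq_colourDegG, hφ.bdegG_eq hdeg, hb]

def ColourChangeStep (Γ : E → CycleIn V E ends) (ψ : E → Bool) (b : Bool) (u w : V) : Prop :=
  ∃ e, (Γ e).IsColourChange ψ u ∧ (Γ e).IsColourChange ψ w ∧ (Γ e).Conn ψ b u w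

lemma IsCyclePartition.colourChangeStep_HG_iff (hpart : IsCyclePartition ends Γ)
    (hlen : ∀ e, (Γ e).len ≤ 4) (b : Bool) {u w : V} :
    ColourChangeStep Γ (HG ends Γ ψ) b u w ↔ ColourChangeStep Γ ψ b u w := by
  refine exists_congr fun e => ?_
  rw [hpart.isColourChange_HG_iff, hpart.isColourChange_HG_iff]
  refine and_congr_right fun hu => and_congr_right fun hw => ?_
  by_cases h : (Γ e).IsAlternating ψ
  · exact hpart.conn_HG_iff_of_isAlternating h b
  · have h' : ¬ (Γ e).IsAlternating (HG ends Γ ψ) := mt (hpart.isAlternating_HG_iff ψ e).1 h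
    exact iff_of_true
      ((Γ e).conn_of_isColourChange (hlen e) h' ((hpart.isColourChange_HG_iff ψ e u).2 hu)
        ((hpart.isColourChange_HG_iff ψ e w).2 hw) b)
      ((Γ e).conn_of_isColourChange (hlen e) h hu hw b)

namespace IsBalanced

variable [Fintype E] (hψ : IsBalanced ends ψ) (hpart : IsCyclePartition ends Γ)
  (hdeg : ∀ v, degG ends v = 4 ∨ degG ends v = 2)
include hψ hpart hdeg

lemma isColourChange_of_isColourChange {e e' : E} {v : V} (hv : (Γ e).IsColourChange ψ v)
    (he' : v ∈ ends e') : (Γ e').IsColourChange ψ v := by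
  obtain ⟨e₀, he₀, hΓ₀⟩ := hpart.exists_mem_ends (show v ∈ Set.range (Γ e).vtx from
    let ⟨j, hj, _⟩ := hv; ⟨j, hj⟩)
  by_cases hcell : Γ e' = Γ e
  · rwa [hcell]
  rcases hdeg v with h4 | h2
  · have hsum := hpart.colourDegG_of_degG_eq_four h4 he₀ he' (hΓ₀ ▸ Ne.symm hcell) ψ true
    rw [hψ.colourDegG_eq_two h4, hΓ₀,
      ((Γ e).colourDeg_eq_one_iff (hΓ₀ ▸ hpart.mem_range_vtx he₀)).2 hv] at hsum
    exact ((Γ e').colourDeg_eq_one_iff (b := true) (hpart.mem_range_vtx he')).1 (by omega)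
  · exact absurd (hpart.cell_eq_of_degG_eq_two h2 he₀ he' ▸ hΓ₀) hcell

/-- At a degree-4 vertex of a balanced configuration the two colour-`b` edge ends lie one in
each cell. -/
lemma isColourChange_of_two_cells {e e' : E} {x : V} {b : Bool} (hx : x ∈ ends e)
    (hx' : x ∈ ends e') (hc : ψ e = b) (hc' : ψ e' = b) (hne : Γ e ≠ Γ e') :
    (Γ e).IsColourChange ψ x ∧ (Γ e').IsColourChange ψ x := by
  rcases hdeg x with h4 | h2
  · have hsum := hpart.colourDegG_of_degG_eq_four h4 hx hx' hne ψ b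
    rw [hψ.colourDegG_eq_two h4] at hsum
    have h₁ := hpart.one_le_colourDeg hc hx
    have h₂ := hpart.one_le_colourDeg hc' hx'
    exact ⟨((Γ e).colourDeg_eq_one_iff (b := b) (hpart.mem_range_vtx hx)).1 (by omega),
      ((Γ e').colourDeg_eq_one_iff (b := b) (hpart.mem_range_vtx hx')).1 (by omega)⟩
  · exact absurd (hpart.cell_eq_of_degG_eq_two h2 hx hx').symm hne

lemma cell_eq_of_colourDeg_eq_two {e e' : E} {x : V} {b : Bool}
    (h2 : (Γ e).colourDeg ψ b x = 2) (hx : x ∈ ends e') (hc : ψ e' = b) : Γ e' = Γ e := by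
  by_contra hne
  have hxr : x ∈ Set.range (Γ e).vtx := by
    by_contra h
    rw [(Γ e).colourDeg_eq_zero h] at h2
    exact absurd h2 (by norm_num)
  obtain ⟨e₀, hx₀, hΓ₀⟩ := hpart.exists_mem_ends hxr
  rcases hdeg x with h4 | h2'
  · have hsum := hpart.colourDegG_of_degG_eq_four h4 hx₀ hx
      (by rw [hΓ₀]; exact Ne.symm hne) ψ b
    rw [hψ.colourDegG_eq_two h4, hΓ₀, h2] at hsum
    have := hpart.one_le_colourDeg hc hx
    omega
  · exact hne ((hpart.cell_eq_of_degG_eq_two h2' hx₀ hx).trans hΓ₀)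

lemma isColourChange_of_conn {e e' : E} {x y : V} {b : Bool} (hy : (Γ e).IsColourChange ψ y)
    (hyx : (Γ e).Conn ψ b y x) (hx : x ∈ ends e') (hc : ψ e' = b) (hne : Γ e' ≠ Γ e) :
    (Γ e).IsColourChange ψ x ∧ (Γ e').IsColourChange ψ x := by
  rcases hyx.cases_tail with rfl | ⟨z, -, i, hi, -, hxi⟩
  · exact ⟨hy, hψ.isColourChange_of_isColourChange hpart hdeg hy hx⟩
  · have h := hψ.isColourChange_of_two_cells hpart hdeg hxi hx hi hc
      (by rw [hpart.cell_edge]; exact hne.symm)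
    rwa [hpart.cell_edge] at h

lemma exists_colourChangeStep_of_vconn {u x : V} (hu : IsColourChangeVertex Γ ψ u) {b : Bool}
    (h : VConn ends ψ b u x) :
    ∃ e y, ReflTransGen (ColourChangeStep Γ ψ b) u y ∧ (Γ e).IsColourChange ψ y ∧
      (Γ e).Conn ψ b y x := by
  induction h with
  | refl =>
    obtain ⟨e, -, hu⟩ := hu
    exact ⟨e, u, ReflTransGen.refl, hu, ReflTransGen.refl⟩
  | tail _ hstep ih =>
    obtain ⟨e, y, hreach, hy, hyx⟩ := ih
    obtain ⟨e', hc, hx, hx'⟩ := hstep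
    by_cases hcell : Γ e' = Γ e
    · exact ⟨e, y, hreach, hy, hyx.trans (hcell ▸ hpart.conn_of_mem_ends hc hx hx')⟩
    · obtain ⟨hxe, hxe'⟩ := hψ.isColourChange_of_conn hpart hdeg hy hyx hx hc hcell
      exact ⟨e', _, hreach.tail ⟨e, hy, hxe, hyx⟩, hxe', hpart.conn_of_mem_ends hc hx hx'⟩

lemma vconn_iff_reflTransGen_colourChangeStep {u w : V} (hu : IsColourChangeVertex Γ ψ u)
    (hw : IsColourChangeVertex Γ ψ w) (b : Bool) :
    VConn ends ψ b u w ↔ ReflTransGen (ColourChangeStep Γ ψ b) u w := by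
  refine ⟨fun h => ?_, fun h => ?_⟩
  · obtain ⟨e, y, hreach, hy, hyw⟩ := hψ.exists_colourChangeStep_of_vconn hpart hdeg hu h
    rcases hyw.cases_tail with rfl | ⟨z, -, i, -, -, hwi⟩
    · exact hreach
    · obtain ⟨e', hw', hwe'⟩ := hw
      have hwe := hψ.isColourChange_of_isColourChange hpart hdeg hwe' hwi
      rw [hpart.cell_edge] at hwe
      exact hreach.tail ⟨e, hy, hwe, hyw⟩
  · exact ReflTransGen.lift' id (fun _ _ ⟨_, _, _, hconn⟩ => hconn.vconn) _ _ h

lemma vconn_HG_iff (hlen : ∀ e, (Γ e).len ≤ 4) {u w : V} (hu : IsColourChangeVertex Γ ψ u)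
    (hw : IsColourChangeVertex Γ ψ w) (b : Bool) :
    VConn ends (HG ends Γ ψ) b u w ↔ VConn ends ψ b u w := by
  have hstep : ColourChangeStep Γ (HG ends Γ ψ) b = ColourChangeStep Γ ψ b := by
    funext x y
    exact propext (hpart.colourChangeStep_HG_iff hlen b)
  rw [(hpart.isBalanced_HG hψ).vconn_iff_reflTransGen_colourChangeStep hpart hdeg
      (hpart.isColourChangeVertex_HG_iff.2 hu) (hpart.isColourChangeVertex_HG_iff.2 hw),
    hψ.vconn_iff_reflTransGen_colourChangeStep hpart hdeg hu hw, hstep]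

end IsBalanced

end Connectivity

section ClosedComponents

variable {V E : Type} {ends : E → Sym2 V} {Γ : E → CycleIn V E ends} {τ ψ : E → Bool}

def component (ends : E → Sym2 V) (ψ : E → Bool) (b : Bool) (v : V) : Set V :=
  {w | VConn ends ψ b v w ∧ ActiveV ends ψ b w}

lemma mem_component_self {b : Bool} {v : V} (h : ActiveV ends ψ b v) :
    v ∈ component ends ψ b v :=
  ⟨ReflTransGen.refl, h⟩

lemma component_eq_of_vconn {b : Bool} {v v' : V} (h : VConn ends ψ b v v') :
    component ends ψ b v = component ends ψ b v' := by
  have hsymm : VConn ends ψ b v' v :=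
    ReflTransGen.mono (fun _ _ ⟨e, hc, hu, hw⟩ => ⟨e, hc, hw, hu⟩) _ _
      (ReflTransGen.swap _ _ h)
  ext w
  exact ⟨fun hw => ⟨ReflTransGen.trans hsymm hw.1, hw.2⟩,
    fun hw => ⟨ReflTransGen.trans h hw.1, hw.2⟩⟩

lemma IsCyclePartition.forall_edge_eq_of_not_isColourChangeVertex
    (hpart : IsCyclePartition ends Γ) {b : Bool} {e : E} {v : V} (hc : ψ e = b) (hv : v ∈ ends e)
    (hno : ∀ w ∈ component ends ψ b v, ¬ IsColourChangeVertex Γ ψ w) (i : ZMod (Γ e).len) :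
    ψ ((Γ e).edge i) = b := by
  obtain ⟨i₀, hi₀⟩ := hpart.1 e
  have hwalk : ∀ d : ℕ, ψ ((Γ e).edge (i₀ + d)) = b ∧
      VConn ends ψ b v ((Γ e).vtx (i₀ + d)) := by
    intro d
    induction d with
    | zero =>
      have hmem := (Γ e).vtx_mem_ends_edge i₀
      rw [hi₀] at hmem
      rw [Nat.cast_zero, add_zero, hi₀]
      exact ⟨hc, ReflTransGen.single ⟨e, hc, hv, hmem⟩⟩
    | succ d ih =>
      obtain ⟨hcd, hvd⟩ := ih
      rw [Nat.cast_succ, ← add_assoc]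
      have hnext := (Γ e).vtx_add_one_mem_ends_edge (i₀ + d)
      have hconn : VConn ends ψ b v ((Γ e).vtx (i₀ + d + 1)) :=
        hvd.tail ⟨_, hcd, (Γ e).vtx_mem_ends_edge _, hnext⟩
      have hnot : ¬ (Γ e).IsColourChange ψ ((Γ e).vtx (i₀ + d + 1)) := fun h =>
        hno _ ⟨hconn, _, hcd, hnext⟩
          ⟨_, (Γ e).vtx_mem_ends_edge _, by rwa [hpart.cell_edge]⟩
      rw [(Γ e).isColourChange_vtx_iff, add_sub_cancel_right, not_not] at hnot
      exact ⟨hnot ▸ hcd, hconn⟩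
  simpa using (hwalk (i - i₀).val).1

variable [Fintype E]

lemma IsBalanced.component_eq_range (hψ : IsBalanced ends ψ) (hpart : IsCyclePartition ends Γ)
    (hdeg : ∀ v, degG ends v = 4 ∨ degG ends v = 2) {b : Bool} {e : E}
    (hmono : ∀ i, ψ ((Γ e).edge i) = b) (j : ZMod (Γ e).len) :
    component ends ψ b ((Γ e).vtx j) = Set.range (Γ e).vtx := by
  ext x
  constructor
  · rintro ⟨hx, -⟩
    induction hx with
    | refl => exact ⟨j, rfl⟩
    | tail _ hstep ih =>
      obtain ⟨e', hc, hy, hx⟩ := hstep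
      obtain ⟨k, rfl⟩ := ih
      have h2 := (Γ e).colourDeg_eq_two_iff.2 ⟨hmono (k - 1), hmono k⟩
      rw [← hψ.cell_eq_of_colourDeg_eq_two hpart hdeg h2 hy hc]
      exact hpart.mem_range_vtx hx
  · rintro ⟨k, rfl⟩
    exact ⟨((Γ e).conn_vtx_of_forall_eq hmono j k).vconn, _, hmono k,
      (Γ e).vtx_mem_ends_edge k⟩

lemma IsBalanced.exists_component_eq_range (hψ : IsBalanced ends ψ)
    (hpart : IsCyclePartition ends Γ) (hdeg : ∀ v, degG ends v = 4 ∨ degG ends v = 2)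
    {b : Bool} {v : V} (hv : ActiveV ends ψ b v)
    (hno : ∀ w ∈ component ends ψ b v, ¬ IsColourChangeVertex Γ ψ w) :
    ∃ e, (∀ i, ψ ((Γ e).edge i) = b) ∧ component ends ψ b v = Set.range (Γ e).vtx := by
  obtain ⟨e, hc, he⟩ := hv
  have hmono := hpart.forall_edge_eq_of_not_isColourChangeVertex hc he hno
  obtain ⟨j, rfl⟩ := hpart.mem_range_vtx he
  exact ⟨e, hmono, hψ.component_eq_range hpart hdeg hmono j⟩

def closedComponents (ends : E → Sym2 V) (τ ψ : E → Bool) (b : Bool) : Set (Set V) :=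
  {C | (∃ v, ActiveV ends ψ b v ∧ C = component ends ψ b v) ∧ ∀ w ∈ C, ¬ Vpp ends τ w}

lemma cycCount_eq_ncard (b : Bool) :
    cycCount ends τ ψ b = (closedComponents ends τ ψ b).ncard :=
  rfl

lemma closedComponents_not (b : Bool) :
    closedComponents ends (fun e => !τ e) ψ b = closedComponents ends τ ψ b := by
  simp only [closedComponents, vpp_not_iff]

def colouredClosedComponents (ends : E → Sym2 V) (τ ψ : E → Bool) : Set (Bool × Set V) :=
  {p | p.2 ∈ closedComponents ends τ ψ p.1}

lemma ncard_colouredClosedComponents [Finite V] :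
    (colouredClosedComponents ends τ ψ).ncard =
      (closedComponents ends τ ψ true).ncard + (closedComponents ends τ ψ false).ncard := by
  have hsplit : colouredClosedComponents ends τ ψ =
      Prod.mk true '' closedComponents ends τ ψ true ∪
        Prod.mk false '' closedComponents ends τ ψ false := by
    ext ⟨b, C⟩
    cases b <;> simp [colouredClosedComponents]
  rw [hsplit, Set.ncard_union_eq, Set.ncard_image_of_injective _ (Prod.mk_right_injective true),
    Set.ncard_image_of_injective _ (Prod.mk_right_injective false)]
  exact Set.disjoint_left.2 fun _ ⟨_, _, h⟩ ⟨_, _, h'⟩ => by simp [← h] at h'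

noncomputable def gyrateComponent (ends : E → Sym2 V) (Γ : E → CycleIn V E ends)
    (ψ : E → Bool) (p : Bool × Set V) : Bool × Set V :=
  if h : ∃ v ∈ p.2, IsColourChangeVertex Γ ψ v then
    (p.1, component ends (HG ends Γ ψ) p.1 h.choose)
  else (!p.1, p.2)

namespace IsBalanced

variable (hψ : IsBalanced ends ψ) (hpart : IsCyclePartition ends Γ)
  (hlen : ∀ e, (Γ e).len ≤ 4) (hdeg : ∀ v, degG ends v = 4 ∨ degG ends v = 2)
include hψ hpart hlen hdeg

lemma mapsTo_gyrateComponent (hvpp : ∀ w, Vpp ends τ w → IsColourChangeVertex Γ ψ w) :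
    Set.MapsTo (gyrateComponent ends Γ ψ) (colouredClosedComponents ends τ ψ)
      (colouredClosedComponents ends τ (HG ends Γ ψ)) := by
  rintro ⟨b, C⟩ ⟨⟨v₀, hv₀, hC₀ : C = component ends ψ b v₀⟩, hC⟩
  subst hC₀
  by_cases h : ∃ v ∈ component ends ψ b v₀, IsColourChangeVertex Γ ψ v
  · obtain ⟨hmem, hchange⟩ := h.choose_spec
    rw [gyrateComponent, dif_pos h]
    refine ⟨⟨h.choose, (hpart.isColourChangeVertex_HG_iff.2 hchange).activeV b, rfl⟩,
      fun w hw hw' => hC w ?_ hw'⟩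
    rw [component_eq_of_vconn hmem.1]
    exact ⟨(hψ.vconn_HG_iff hpart hdeg hlen hchange (hvpp w hw') b).1 hw.1,
      (hvpp w hw').activeV b⟩
  · rw [gyrateComponent, dif_neg h]
    push Not at h
    obtain ⟨e, hmono, hrange⟩ := hψ.exists_component_eq_range hpart hdeg hv₀ h
    have hmono' : ∀ i, HG ends Γ ψ ((Γ e).edge i) = !b := fun i => by
      rw [hpart.HG_edge_of_not_isAlternating ((Γ e).not_isAlternating_of_forall_eq hmono),
        hmono]
    refine ⟨⟨(Γ e).vtx 0, ⟨_, hmono' 0, (Γ e).vtx_mem_ends_edge 0⟩, ?_⟩, hC⟩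
    rw [(hpart.isBalanced_HG hψ).component_eq_range hpart hdeg hmono' 0, hrange]

lemma leftInvOn_gyrateComponent :
    Set.LeftInvOn (gyrateComponent ends Γ (HG ends Γ ψ)) (gyrateComponent ends Γ ψ)
      (colouredClosedComponents ends τ ψ) := by
  rintro ⟨b, C⟩ ⟨⟨v₀, -, hC₀ : C = component ends ψ b v₀⟩, -⟩
  subst hC₀
  by_cases h : ∃ v ∈ component ends ψ b v₀, IsColourChangeVertex Γ ψ v
  · obtain ⟨hmem, hchange⟩ := h.choose_spec
    have hchange' := hpart.isColourChangeVertex_HG_iff.2 hchange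
    have h' : ∃ v ∈ component ends (HG ends Γ ψ) b h.choose,
        IsColourChangeVertex Γ (HG ends Γ ψ) v :=
      ⟨_, mem_component_self (hchange'.activeV b), hchange'⟩
    obtain ⟨hmem', hchange''⟩ := h'.choose_spec
    have hconn := (hψ.vconn_HG_iff hpart hdeg hlen hchange
      (hpart.isColourChangeVertex_HG_iff.1 hchange'') b).1 hmem'.1
    have hfirst : gyrateComponent ends Γ ψ (b, component ends ψ b v₀) =
        (b, component ends (HG ends Γ ψ) b h.choose) := dif_pos h
    rw [hfirst, gyrateComponent, dif_pos h', hpart.HG_HG]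
    exact Prod.ext rfl ((component_eq_of_vconn hmem.1).trans (component_eq_of_vconn hconn)).symm
  · have h' : ¬ ∃ v ∈ component ends ψ b v₀, IsColourChangeVertex Γ (HG ends Γ ψ) v := by
      simpa only [hpart.isColourChangeVertex_HG_iff] using h
    have hfirst : gyrateComponent ends Γ ψ (b, component ends ψ b v₀) =
        (!b, component ends ψ b v₀) := dif_neg h
    rw [hfirst, gyrateComponent, dif_neg h', Bool.not_not]

end IsBalanced

lemma IsBalanced.ncard_colouredClosedComponents_HG [Finite V] (hψ : IsBalanced ends ψ)
    (hpart : IsCyclePartition ends Γ) (hlen : ∀ e, (Γ e).len ≤ 4)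
    (hdeg : ∀ v, degG ends v = 4 ∨ degG ends v = 2)
    (hvpp : ∀ w, Vpp ends τ w → IsColourChangeVertex Γ ψ w) :
    (colouredClosedComponents ends τ (HG ends Γ ψ)).ncard =
      (colouredClosedComponents ends τ ψ).ncard := by
  have hψ' := hpart.isBalanced_HG hψ
  have hvpp' : ∀ w, Vpp ends τ w → IsColourChangeVertex Γ (HG ends Γ ψ) w :=
    fun w hw => hpart.isColourChangeVertex_HG_iff.2 (hvpp w hw)
  have hmaps := hψ'.mapsTo_gyrateComponent hpart hlen hdeg hvpp'
  have hinv := hψ'.leftInvOn_gyrateComponent (τ := τ) hpart hlen hdeg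
  rw [hpart.HG_HG] at hmaps hinv
  exact (Set.InvOn.bijOn ⟨hinv, hψ.leftInvOn_gyrateComponent hpart hlen hdeg⟩
    hmaps (hψ.mapsTo_gyrateComponent hpart hlen hdeg hvpp)).ncard_eq

end ClosedComponents

theorem gyration_preserves_link_data_general
    (V E : Type) [Fintype V] [Fintype E]
    (ends : E → Sym2 V)
    (hdeg : ∀ v, degG ends v = 4 ∨ degG ends v = 2)
    (τ : E → Bool) (Γ : E → CycleIn V E ends)
    (hvalid : ValidTriplet ends τ Γ)
    (φ : E → Bool) (hφ : IsFplG ends τ φ) :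
    IsFplG ends (fun e => !(τ e)) (HG ends Γ φ) ∧
    (∀ u w, Vpp ends τ u → Vpp ends τ w →
      ((VConn ends φ true u w ↔ VConn ends (HG ends Γ φ) true u w) ∧
       (VConn ends φ false u w ↔ VConn ends (HG ends Γ φ) false u w))) ∧
    (cycCount ends (fun e => !(τ e)) (HG ends Γ φ) true
        + cycCount ends (fun e => !(τ e)) (HG ends Γ φ) false
      = cycCount ends τ φ true + cycCount ends τ φ false) ∧
    (∀ ψ, IsFplG ends τ ψ → HG ends Γ (HG ends Γ ψ) = ψ) ∧
    Set.BijOn (HG ends Γ) {ψ | IsFplG ends τ ψ} {ψ | IsFplG ends (fun e => !(τ e)) ψ} := by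
  have hpart := hvalid.1
  have hlen := hvalid.2.1
  have hbal : IsBalanced ends φ := hφ.2
  have hvpp : ∀ w, Vpp ends τ w → IsColourChangeVertex Γ φ w :=
    fun w => hpart.isColourChangeVertex_of_vpp hφ
  refine ⟨hvalid.isFplG_HG hφ, fun u w hu hw => ⟨?_, ?_⟩, ?_, fun ψ _ => hpart.HG_HG ψ,
    hvalid.bijOn_HG⟩
  · exact (hbal.vconn_HG_iff hpart hdeg hlen (hvpp u hu) (hvpp w hw) true).symm
  · exact (hbal.vconn_HG_iff hpart hdeg hlen (hvpp u hu) (hvpp w hw) false).symm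
  · simp only [cycCount_eq_ncard, closedComponents_not, ← ncard_colouredClosedComponents]
    exact hbal.ncard_colouredClosedComponents_HG hpart hlen hdeg hvpp

/-- **Gyration preserves refined link-pattern data.**  For a valid triplet
`(𝒢, τ, Γ)` and `φ ∈ Fpl(𝒢,τ)`: `H_Γ(φ) ∈ Fpl(𝒢,τ̄)`; the black and white
connectivity between vertices of `V''(τ)` (i.e. `π_b` and `π_w`) is preserved; the
number of monochromatic closed cycles `ℓ` is preserved; and `H_Γ` is an involution,
hence a bijection from `Fpl(𝒢,τ)` onto `Fpl(𝒢,τ̄)`. -/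
theorem gyration_preserves_link_data
    (V E : Type) [Fintype V] [Fintype E] [DecidableEq V] [DecidableEq E]
    (ends : E → Sym2 V)
    (hdeg : ∀ v, degG ends v = 4 ∨ degG ends v = 2)
    (τ : E → Bool) (Γ : E → CycleIn V E ends)
    (hvalid : ValidTriplet ends τ Γ)
    (φ : E → Bool) (hφ : IsFplG ends τ φ) :
    IsFplG ends (fun e => !(τ e)) (HG ends Γ φ) ∧
    (∀ u w, Vpp ends τ u → Vpp ends τ w →
      ((VConn ends φ true u w ↔ VConn ends (HG ends Γ φ) true u w) ∧
       (VConn ends φ false u w ↔ VConn ends (HG ends Γ φ) false u w))) ∧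
    (cycCount ends (fun e => !(τ e)) (HG ends Γ φ) true
        + cycCount ends (fun e => !(τ e)) (HG ends Γ φ) false
      = cycCount ends τ φ true + cycCount ends τ φ false) ∧
    (∀ ψ, IsFplG ends τ ψ → HG ends Γ (HG ends Γ ψ) = ψ) ∧
    Set.BijOn (HG ends Γ) {ψ | IsFplG ends τ ψ} {ψ | IsFplG ends (fun e => !(τ e)) ψ} :=
  gyration_preserves_link_data_general V E ends hdeg τ Γ hvalid φ hφ
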